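/- Quantile comparison via symmetric difference: for real random variables T, and quantile functions c_W, c_{W*} (right-continuous generalized inverses of two conditional CDFs), and any α, ω with α±ω ∈ (0,1), P({T ≤ c_W(α)} Δ {T ≤ c_{W*}(α)}) ≤ 2P(c_{W*}(α−ω) < T ≤ c_{W*}(α+ω)) + P(c_{W*}(α−ω) > c_W(α)) + P(c_W(α) > c_{W*}(α+ω)). -/

import Mathlib

open MeasureTheory

/-- Quantile comparison via symmetric difference (step in the proof of Lemma 3.2 of
Chernozhukov et al. (2013)). -/
theorem quantile_comparison_symmDiff {Ω : Type*} [MeasurableSpace Ω]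
    (P : Measure Ω) [IsProbabilityMeasure P] (T : Ω → ℝ) (cW cWs : ℝ → Ω → ℝ)
    (hW : ∀ x, Monotone (fun α => cW α x)) (hWs : ∀ x, Monotone (fun α => cWs α x))
    (α ω : ℝ) (hω : 0 ≤ ω) (h1 : 0 < α - ω) (h1' : α - ω < 1) (h2 : 0 < α + ω)
    (h2' : α + ω < 1) :
    P (symmDiff {x | T x ≤ cW α x} {x | T x ≤ cWs α x}) ≤
      2 * P {x | cWs (α - ω) x < T x ∧ T x ≤ cWs (α + ω) x} +
        P {x | cW α x < cWs (α - ω) x} + P {x | cWs (α + ω) x < cW α x} := by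
  set C := {x | cWs (α - ω) x < T x ∧ T x ≤ cWs (α + ω) x}
  set D := {x | cW α x < cWs (α - ω) x}
  set E := {x | cWs (α + ω) x < cW α x}
  have hsub : symmDiff {x | T x ≤ cW α x} {x | T x ≤ cWs α x} ⊆ C ∪ D ∪ E := by
    intro x hx
    have hm1 : cWs (α - ω) x ≤ cWs α x := hWs x (by linarith)
    have hm2 : cWs α x ≤ cWs (α + ω) x := hWs x (by linarith)
    rw [Set.symmDiff_def] at hx
    rcases hx with ⟨h, h'⟩ | ⟨h, h'⟩ <;>
      simp only [Set.mem_setOf_eq, not_le] at h h' <;>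
      by_cases hD : cW α x < cWs (α - ω) x <;>
      by_cases hE : cWs (α + ω) x < cW α x
    · exact Or.inl (Or.inr hD)
    · exact Or.inl (Or.inr hD)
    · exact Or.inr hE
    · exact Or.inl (Or.inl ⟨lt_of_le_of_lt hm1 h', by linarith⟩)
    · exact Or.inl (Or.inr hD)
    · exact Or.inl (Or.inr hD)
    · exact Or.inr hE
    · exact Or.inl (Or.inl ⟨by linarith, le_trans h hm2⟩)
  calc P (symmDiff {x | T x ≤ cW α x} {x | T x ≤ cWs α x})
      ≤ P (C ∪ D ∪ E) := measure_mono hsub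
    _ ≤ P (C ∪ D) + P E := measure_union_le _ _
    _ ≤ P C + P D + P E := by gcongr; exact measure_union_le _ _
    _ ≤ 2 * P C + P D + P E := by
        have : P C ≤ 2 * P C := le_mul_of_one_le_left zero_le one_le_two
        gcongr
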